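/- Let A and B be triangles in ℝ², both homothetic to a reference triangle E, that are centrally symmetric to each other with respect to the midpoint of their common side, specifically A₁ = B₂ and A₂ = B₁ with B the reflection of A through the midpoint of segment A₁A₂. If A has barycentric coordinates (α₁,α₂,α₃), then B has barycentric coordinates (−α₁ − 1/3, −α₂ − 1/3, −α₃ + 2/3); in particular α + β = (−1/3, −1/3, 2/3). -/
import Mathlib


/-- A triangle in `ℝ²` is nondegenerate. -/
def Nondeg (T : Fin 3 → (Fin 2 → ℝ)) : Prop :=
  ¬ Collinear ℝ ({T 0, T 1, T 2} : Set (Fin 2 → ℝ))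

/-- The triangle `D` is homothetic to the reference triangle `E` and has
barycentric coordinates `δ`: the homothety ratio from `D` to `E` equals
`δ 0 + δ 1 + δ 2 ≠ 0`, and the centroid of `D` has barycentric coordinates
`δ i / (δ 0 + δ 1 + δ 2)` with respect to `E`. -/
def HasCoords (E D : Fin 3 → (Fin 2 → ℝ)) (δ : Fin 3 → ℝ) : Prop :=
  δ 0 + δ 1 + δ 2 ≠ 0 ∧
  (∃ t : Fin 2 → ℝ, ∀ i, (δ 0 + δ 1 + δ 2) • D i + t = E i) ∧
  (1/3 : ℝ) • (D 0 + D 1 + D 2) =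
    (δ 0 / (δ 0 + δ 1 + δ 2)) • E 0 + (δ 1 / (δ 0 + δ 1 + δ 2)) • E 1 +
      (δ 2 / (δ 0 + δ 1 + δ 2)) • E 2

/-- If `B` is the reflection of `A` through the midpoint of its side
`A₁A₂` (so `B₁ = A₂`, `B₂ = A₁`), and `A` has barycentric coordinates
`α`, then `B` has barycentric coordinates
`(−α₁ − 1/3, −α₂ − 1/3, −α₃ + 2/3)`; in particular
`α + β = (−1/3, −1/3, 2/3)`. -/
theorem reflection_through_side_midpoint_coordinates
    (E A B : Fin 3 → (Fin 2 → ℝ)) (α : Fin 3 → ℝ)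
    (hE : Nondeg E) (hA : Nondeg A)
    (hcoords : HasCoords E A α)
    (hB0 : B 0 = A 1) (hB1 : B 1 = A 0)
    (hB2 : B 2 = (2 : ℝ) • ((1/2 : ℝ) • (A 0 + A 1)) - A 2) :
    HasCoords E B ![-(α 0) - 1/3, -(α 1) - 1/3, -(α 2) + 2/3] ∧
    (fun i => α i + (![-(α 0) - 1/3, -(α 1) - 1/3, -(α 2) + 2/3]) i) =
      ![(-1/3 : ℝ), -1/3, 2/3] := by
  obtain ⟨hs, ⟨t, ht⟩, hcent⟩ := hcoords
  set s : ℝ := α 0 + α 1 + α 2 with hsdef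
  have h0 := ht 0
  have h1 := ht 1
  have h2 := ht 2
  have hsum : (-(α 0) - 1/3) + (-(α 1) - 1/3) + (-(α 2) + 2/3) = -s := by ring
  refine ⟨⟨?_, ?_, ?_⟩, ?_⟩
  · simp only [Matrix.cons_val_zero, Matrix.cons_val_one, Matrix.head_cons,
      Matrix.cons_val_two, Matrix.tail_cons]
    rw [hsum]
    simpa using hs
  · refine ⟨s • (A 0 + A 1) + t, fun i => ?_⟩
    simp only [Matrix.cons_val_zero, Matrix.cons_val_one, Matrix.head_cons,
      Matrix.cons_val_two, Matrix.tail_cons, hsum]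
    fin_cases i
    · show -s • B 0 + (s • (A 0 + A 1) + t) = E 0
      rw [hB0, ← h0]
      funext j
      simp only [Pi.add_apply, Pi.smul_apply, smul_eq_mul]
      ring
    · show -s • B 1 + (s • (A 0 + A 1) + t) = E 1
      rw [hB1, ← h1]
      funext j
      simp only [Pi.add_apply, Pi.smul_apply, smul_eq_mul]
      ring
    · show -s • B 2 + (s • (A 0 + A 1) + t) = E 2
      rw [hB2, ← h2]
      funext j
      simp only [Pi.add_apply, Pi.sub_apply, Pi.smul_apply, smul_eq_mul]
      ring
  · simp only [Matrix.cons_val_zero, Matrix.cons_val_one, Matrix.head_cons,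
      Matrix.cons_val_two, Matrix.tail_cons, hsum]
    rw [hB0, hB1, hB2]
    funext j
    have hc := congrFun hcent j
    have e0 := congrFun h0 j
    have e1 := congrFun h1 j
    have e2 := congrFun h2 j
    simp only [Pi.add_apply, Pi.sub_apply, Pi.smul_apply, smul_eq_mul] at hc e0 e1 e2 ⊢
    rw [← e0, ← e1, ← e2] at hc ⊢
    field_simp at hc ⊢
    nlinarith [hc, sq_nonneg s]
  · funext i
    fin_cases i <;> simp <;> ring
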